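/- arXiv:2104.10632 — 5 statements merged into one kernel-verified Lean document; each statement's English description precedes it below -/
import Mathlib

section
/- Let G be a group and G₀ a subgroup of G of finite index. Then G is quasi-simple if and only if G₀ is quasi-simple (as a group in its own right). -/
/-- A group `G` is *quasi-simple* if it has no abelian subgroup of finite index,
and for every infinite subgroup `H` of infinite index, the normalizer of `H`
has infinite index in `G`.  (Index `0` means infinite index.) -/
def IsQuasiSimple (G : Type*) [Group G] : Prop :=
  (∀ H : Subgroup G, (∀ x ∈ H, ∀ y ∈ H, x * y = y * x) → H.index = 0) ∧
  (∀ H : Subgroup G, Infinite H → H.index = 0 → (Subgroup.normalizer (H : Set G)).index = 0)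

/-!
Intersecting with the finite-index subgroup `G₀` and pushing forward along its inclusion
both preserve commutativity, infiniteness and infinite index. Normalizers are related by
`N_{G₀}(K) ≤ N_G(K) ∩ G₀` and `N_G(H) ∩ G₀ ≤ N_{G₀}(H ∩ G₀)`, and a subgroup of a subgroup
of infinite index has infinite index, so each clause of quasi-simplicity passes between
`G` and `G₀` in both directions.
-/

namespace Subgroup

variable {G : Type*} [Group G] {G₀ : Subgroup G}

theorem relIndex_eq_zero_iff_index_eq_zero (hG₀ : G₀.index ≠ 0) (H : Subgroup G) :
    H.relIndex G₀ = 0 ↔ H.index = 0 := by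
  refine ⟨index_eq_zero_of_relIndex_eq_zero, fun hH => by_contra fun hHG₀ => ?_⟩
  rw [← relIndex_top_right] at hG₀ hH
  exact relIndex_ne_zero_trans hHG₀ hG₀ hH

theorem index_map_subtype_eq_zero_iff (hG₀ : G₀.index ≠ 0) (K : Subgroup G₀) :
    (K.map G₀.subtype).index = 0 ↔ K.index = 0 := by
  rw [index_map_subtype, mul_eq_zero, or_iff_left hG₀]

theorem infinite_map_subtype_iff (K : Subgroup G₀) :
    Infinite (K.map G₀.subtype) ↔ Infinite K :=
  (K.equivMapOfInjective _ G₀.subtype_injective).toEquiv.infinite_iff.symm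

theorem infinite_inf_of_relIndex_ne_zero {H K : Subgroup G} [Infinite H]
    (hK : K.relIndex H ≠ 0) : Infinite ↥(K ⊓ H) := by
  rw [← not_finite_iff_infinite]
  intro _
  have hcard : Nat.card ↥(K ⊓ H) * K.relIndex H = Nat.card H := by
    rw [← relIndex_bot_left, ← relIndex_bot_left, relIndex_inf_mul_relIndex, bot_inf_eq]
  exact not_finite_iff_infinite.mpr ‹Infinite H› (Nat.finite_of_card_ne_zero (hcard ▸ mul_ne_zero Nat.card_pos.ne' hK))

theorem infinite_subgroupOf (hG₀ : G₀.index ≠ 0) (H : Subgroup G) [Infinite H] :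
    Infinite (H.subgroupOf G₀) := by
  have hG₀H : G₀.relIndex H ≠ 0 := fun h => hG₀ (index_eq_zero_of_relIndex_eq_zero h)
  rw [← infinite_map_subtype_iff, subgroupOf_map_subtype, inf_comm]
  exact infinite_inf_of_relIndex_ne_zero hG₀H

theorem normalizer_le_normalizer_map_subgroupOf (K : Subgroup G₀) :
    normalizer (K : Set G₀) ≤ (normalizer (K.map G₀.subtype : Set G)).subgroupOf G₀ :=
  map_le_iff_le_comap.mp (le_normalizer_map _)

end Subgroup

open Subgroup

section

variable {G : Type*} [Group G] {G₀ : Subgroup G}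

theorem IsQuasiSimple.subgroup (hG : IsQuasiSimple G) (hG₀ : G₀.index ≠ 0) :
    IsQuasiSimple G₀ := by
  obtain ⟨hab, hnorm⟩ := hG
  refine ⟨fun K hK => ?_, fun K hK hKidx => ?_⟩
  · rw [← index_map_subtype_eq_zero_iff hG₀]
    refine hab _ ?_
    rintro _ ⟨x, hx, rfl⟩ _ ⟨y, hy, rfl⟩
    rw [← map_mul, ← map_mul, hK x hx y hy]
  · have hN := hnorm (K.map G₀.subtype) ((infinite_map_subtype_iff K).mpr hK)
      ((index_map_subtype_eq_zero_iff hG₀ K).mpr hKidx)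
    rw [← relIndex_eq_zero_iff_index_eq_zero hG₀] at hN
    exact Nat.eq_zero_of_zero_dvd
      (hN ▸ index_dvd_of_le (normalizer_le_normalizer_map_subgroupOf K))

theorem IsQuasiSimple.of_subgroup (hG₀ : G₀.index ≠ 0) (h : IsQuasiSimple G₀) :
    IsQuasiSimple G := by
  obtain ⟨hab, hnorm⟩ := h
  refine ⟨fun H hH => ?_, fun H hH hHidx => ?_⟩
  · rw [← relIndex_eq_zero_iff_index_eq_zero hG₀]
    exact hab _ fun x hx y hy => Subtype.ext (hH _ hx _ hy)
  · have hN := hnorm (H.subgroupOf G₀) (infinite_subgroupOf hG₀ H)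
      ((relIndex_eq_zero_iff_index_eq_zero hG₀ H).mpr hHidx)
    rw [← relIndex_eq_zero_iff_index_eq_zero hG₀]
    exact Nat.eq_zero_of_zero_dvd (hN ▸ index_dvd_of_le (le_normalizer_comap G₀.subtype))

end

theorem quasiSimple_iff_of_finiteIndex {G : Type*} [Group G] (G₀ : Subgroup G)
    (hG₀ : G₀.index ≠ 0) :
    IsQuasiSimple G ↔ IsQuasiSimple G₀ :=
  ⟨fun h => h.subgroup hG₀, IsQuasiSimple.of_subgroup hG₀⟩
end

section
/- Let G be a group and Z a finite normal subgroup of G. Then G is quasi-simple if and only if the quotient group G/Z is quasi-simple. -/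
open Subgroup
open scoped commutatorElement

namespace Subgroup

variable {G : Type*} [Group G]

theorem relIndex_sup_ne_zero_of_finite (H N : Subgroup G) [N.Normal] [Finite N] :
    H.relIndex (H ⊔ N) ≠ 0 := by
  refine Nat.card_ne_zero.mpr ⟨inferInstance, Finite.of_surjective
    (fun n : N ↦ (⟨n, mem_sup_right n.2⟩ : ↥(H ⊔ N))) ?_⟩
  rintro ⟨⟨x, hx⟩⟩
  rw [sup_comm, ← SetLike.mem_coe, normal_mul] at hx
  obtain ⟨n, hn, h, hh, rfl⟩ := hx
  exact ⟨⟨n, hn⟩, QuotientGroup.eq.mpr (by simpa [mem_subgroupOf] using hh)⟩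

theorem index_centralizer_ne_zero_of_finite (N : Subgroup G) [N.Normal] [Finite N] :
    (centralizer (N : Set G)).index ≠ 0 := by
  have : centralizer (N : Set G) = (MulAut.conjNormal (H := N)).ker := by
    ext g
    simp [mem_centralizer_iff, MulEquiv.ext_iff, Subtype.ext_iff, MulAut.conjNormal_apply,
      eq_mul_inv_iff_mul_eq, eq_comm]
  rw [this, index_ker]
  exact Nat.card_ne_zero.mpr ⟨inferInstance, inferInstance⟩

theorem exists_maximal_abelian_of_subset_centralizer (C : Subgroup G) {s : Set G} (hsC : s ⊆ C)
    (hs : s ⊆ s.centralizer) :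
    ∃ M : Subgroup G, s ⊆ M ∧ M ≤ C ∧ M ≤ centralizer M ∧ C ⊓ centralizer M ≤ M := by
  set S := {t : Set G | t ⊆ C ∧ t ⊆ t.centralizer}
  have hchain (c) (hcS : c ⊆ S) (hc : IsChain (· ⊆ ·) c) : ⋃₀ c ∈ S := by
    refine ⟨Set.sUnion_subset fun t ht ↦ (hcS ht).1, ?_⟩
    rintro a ⟨t₁, ht₁, ha⟩ b ⟨t₂, ht₂, hb⟩
    rcases hc.total ht₁ ht₂ with h | h
    exacts [(hcS ht₂).2 (h ha) b hb, (hcS ht₁).2 ha b (h hb)]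
  obtain ⟨t, hst, htmax⟩ := zorn_subset_nonempty S
    (fun c hcS hc _ ↦ ⟨⋃₀ c, hchain c hcS hc, fun _ ↦ Set.subset_sUnion_of_mem⟩) s ⟨hsC, hs⟩
  obtain ⟨htC, htcomm⟩ := htmax.prop
  have hcomm : closure t ≤ centralizer (closure t) := by
    rw [centralizer_closure]
    exact (closure_le _).mpr htcomm
  refine ⟨closure t, hst.trans subset_closure, (closure_le _).mpr htC, hcomm, ?_⟩
  rintro x ⟨hxC, hx⟩
  have hxt : ∀ y ∈ t, y * x = x * y := fun y hy ↦ hx y (subset_closure hy)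
  have hins : insert x t ∈ S := by
    refine ⟨Set.insert_subset hxC htC, ?_⟩
    rintro y (rfl | hy) z (rfl | hz)
    exacts [rfl, hxt z hz, (hxt y hy).symm, htcomm hy z hz]
  exact subset_closure (htmax.eq_of_subset hins (Set.subset_insert x t) ▸ Set.mem_insert x t)

section CommutatorsInFiniteSubgroup

variable {C Z : Subgroup G}

def commutatorLeftHom (hCZ : C ≤ centralizer Z) (hCC : ⁅C, C⁆ ≤ Z) {m : G} (hm : m ∈ C) :
    C →* G where
  toFun x := ⁅m, (x : G)⁆
  map_one' := by simp
  map_mul' a b := by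
    have hb : ⁅m, (b : G)⁆ ∈ Z := commutator_le.mp hCC m hm b b.2
    calc ⁅m, ((a * b : C) : G)⁆ = ⁅m, (a : G)⁆ * ((a : G) * ⁅m, (b : G)⁆ * (a : G)⁻¹) := by
          simp only [coe_mul, commutatorElement_def]; group
      _ = ⁅m, (a : G)⁆ * ⁅m, (b : G)⁆ := by
          rw [← hCZ a.2 _ hb, mul_inv_cancel_right]

theorem relIndex_centralizer_singleton_ne_zero [Finite Z] (hCZ : C ≤ centralizer Z)
    (hCC : ⁅C, C⁆ ≤ Z) {m : G} (hm : m ∈ C) : (centralizer {m}).relIndex C ≠ 0 := by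
  have hker : (centralizer {m}).subgroupOf C = (commutatorLeftHom hCZ hCC hm).ker := by
    ext x
    simp [mem_subgroupOf, mem_centralizer_iff_commutator_eq_one, commutatorLeftHom]
  have hrange : (commutatorLeftHom hCZ hCC hm).range ≤ Z := by
    rintro _ ⟨x, rfl⟩
    exact commutator_le.mp hCC m hm x x.2
  have : Finite (commutatorLeftHom hCZ hCC hm).range :=
    Finite.of_injective _ (inclusion_injective hrange)
  rw [relIndex, hker, index_ker]
  exact Nat.card_ne_zero.mpr ⟨inferInstance, inferInstance⟩

theorem relIndex_centralizer_ne_zero [Finite Z] (hCZ : C ≤ centralizer Z) (hCC : ⁅C, C⁆ ≤ Z)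
    {s : Set G} [Finite s] (hs : s ⊆ C) : (centralizer s).relIndex C ≠ 0 := by
  rw [centralizer_eq_iInf, iInf_subtype']
  exact relIndex_iInf_ne_zero fun m ↦ relIndex_centralizer_singleton_ne_zero hCZ hCC (hs m.2)

end CommutatorsInFiniteSubgroup

section FiniteKernel

variable {Q : Type*} [Group Q] {f : G →* Q}

theorem index_map_eq_zero_of_finite_ker [Finite f.ker] {H : Subgroup G} (hH : H.index = 0) :
    (H.map f).index = 0 := by
  rw [← relIndex_mul_index (le_sup_left : H ≤ H ⊔ f.ker)] at hH
  rw [index_map, (mul_eq_zero.mp hH).resolve_left (H.relIndex_sup_ne_zero_of_finite f.ker),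
    zero_mul]

theorem infinite_map_of_finite_ker [Finite f.ker] {H : Subgroup G} [Infinite H] :
    Infinite (H.map f) := by
  rw [← not_finite_iff_infinite, ← f.domRestrict_range]
  intro hrange
  have hker : Finite (f.domRestrict H).ker := by
    rw [f.ker_domRestrict]
    exact Finite.of_injective (fun x ↦ (⟨x.1.1, x.2⟩ : f.ker)) fun _ _ h ↦ by
      ext; exact congrArg (Subtype.val : f.ker → G) h
  exact not_finite_iff_infinite.mpr ‹_›
    ((f.domRestrict H).finite_iff_finite_ker_range.mpr ⟨hker, hrange⟩)

theorem infinite_comap_of_surjective (hf : Function.Surjective f) {K : Subgroup Q}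
    [Infinite K] : Infinite (K.comap f) :=
  Infinite.of_surjective _ (f.subgroupComap_surjective_of_surjective K hf)

end FiniteKernel

end Subgroup

namespace IsQuasiSimple

variable {G : Type*} [Group G]

theorem index_eq_zero_of_le_centralizer (hG : IsQuasiSimple G) {H : Subgroup G}
    (hH : H ≤ centralizer H) : H.index = 0 :=
  hG.1 H fun x hx _ hy ↦ hH hy x hx

theorem index_eq_zero_of_commutator_le {C Z : Subgroup G} [Finite Z] (hG : IsQuasiSimple G)
    (hCZ : C ≤ centralizer Z) (hCC : ⁅C, C⁆ ≤ Z) : C.index = 0 := by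
  by_contra hC
  obtain ⟨M, hZM, hMC, hMab, hMmax⟩ := exists_maximal_abelian_of_subset_centralizer C
    (s := (Z ⊓ C : Subgroup G)) inf_le_right fun a ha b hb ↦ hCZ ha.2 b hb.1
  have hM : M.index = 0 := hG.index_eq_zero_of_le_centralizer hMab
  have hMinf : Infinite M := by
    rw [← not_finite_iff_infinite]
    intro
    have hcent := relIndex_centralizer_ne_zero hCZ hCC (s := M) hMC
    have : (C ⊓ centralizer M).index = 0 := Nat.eq_zero_of_zero_dvd (hM ▸ index_dvd_of_le hMmax)
    rw [← relIndex_mul_index inf_le_left, inf_relIndex_left] at this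
    exact mul_ne_zero hcent hC this
  have hCM : C ≤ normalizer (M : Set G) := le_normalizer_iff_commutator_le_right.mpr <|
    ((commutator_mono le_rfl hMC).trans (le_inf hCC C.commutator_le_self)).trans hZM
  exact hC (Nat.eq_zero_of_zero_dvd (hG.2 M hMinf hM ▸ index_dvd_of_le hCM))

variable {Q : Type*} [Group Q] {f : G →* Q}

theorem of_surjective (hG : IsQuasiSimple G) (hf : Function.Surjective f) [Finite f.ker] :
    IsQuasiSimple Q := by
  refine ⟨fun A hA ↦ ?_, fun K _ hK ↦ ?_⟩
  · by_contra hA0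
    have hCC : ⁅A.comap f, A.comap f⁆ ≤ f.ker := commutator_le.mpr fun x hx y hy ↦ by
      rw [f.mem_ker, map_commutatorElement, commutatorElement_eq_one_iff_commute]
      exact hA _ hx _ hy
    exact index_inf_ne_zero ((index_comap_of_surjective _ hf).trans_ne hA0)
      (index_centralizer_ne_zero_of_finite f.ker) <| hG.index_eq_zero_of_commutator_le inf_le_right
        ((commutator_mono inf_le_left inf_le_left).trans hCC)
  · rw [← index_comap_of_surjective _ hf, comap_normalizer_eq_of_surjective K hf]
    exact hG.2 _ (infinite_comap_of_surjective hf) ((index_comap_of_surjective _ hf).trans hK)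

theorem of_finite_ker (hQ : IsQuasiSimple Q) (hf : Function.Surjective f) [Finite f.ker] :
    IsQuasiSimple G := by
  refine ⟨fun A hA ↦ ?_, fun H _ hH ↦ ?_⟩
  · have hmap : A.map f ≤ centralizer (A.map f) := by
      rintro _ ⟨a, ha, rfl⟩ _ ⟨b, hb, rfl⟩
      simp only [← map_mul, hA b hb a ha]
    exact Nat.eq_zero_of_zero_dvd (hQ.index_eq_zero_of_le_centralizer hmap ▸ index_map_dvd _ hf)
  · have hN := hQ.2 _ (infinite_map_of_finite_ker (f := f)) (index_map_eq_zero_of_finite_ker hH)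
    rw [← index_comap_of_surjective _ hf] at hN
    exact Nat.eq_zero_of_zero_dvd
      (hN ▸ index_dvd_of_le (map_le_iff_le_comap.mp (le_normalizer_map f)))

end IsQuasiSimple

theorem quasiSimple_iff_quotient_of_finite_normal {G : Type*} [Group G]
    (Z : Subgroup G) [Z.Normal] (hZ : Finite Z) :
    IsQuasiSimple G ↔ IsQuasiSimple (G ⧸ Z) := by
  have : Finite (QuotientGroup.mk' Z).ker := by rwa [QuotientGroup.ker_mk']
  exact ⟨fun h ↦ h.of_surjective (QuotientGroup.mk'_surjective Z),
    fun h ↦ h.of_finite_ker (QuotientGroup.mk'_surjective Z)⟩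
end

section
/- Let f : G → G₁ be a surjective group homomorphism with finite kernel, and suppose that G₁ has no proper subgroup of finite index. Let G₀ be a subgroup of G of finite index such that |G₀ ∩ Ker f| ≤ |H ∩ Ker f| for every subgroup H of G of finite index. Then G₀ has no proper subgroup of finite index. -/
/-! If `K ≤ G₀` has finite index, its image under the surjection `f` has finite index, hence is all
of `G₁`; so `K · ker f = G`, and the modular law gives `G₀ = K · (G₀ ∩ ker f)`. As `K ∩ ker f` is
contained in the finite group `G₀ ∩ ker f` and, by minimality, at least as large, the two coincide,
whence `G₀ ∩ ker f ≤ K` and `K = G₀`. -/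

namespace Subgroup

variable {G G₁ : Type*} [Group G] [Group G₁]

theorem sup_ker_eq_top_of_map_eq_top {f : G →* G₁} {H : Subgroup G} (h : H.map f = ⊤) :
    H ⊔ f.ker = ⊤ := by
  rw [← comap_map_eq, h, comap_top]

theorem index_map_ne_zero_of_surjective {f : G →* G₁} (hf : Function.Surjective f)
    {H : Subgroup G} (hH : H.index ≠ 0) : (H.map f).index ≠ 0 :=
  fun h ↦ hH (Nat.eq_zero_of_zero_dvd (h ▸ index_map_dvd H hf))

open scoped Pointwise in
theorem eq_of_le_of_sup_eq_top_of_inf_le {H G₀ N : Subgroup G} [N.Normal] (hle : H ≤ G₀)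
    (hsup : H ⊔ N = ⊤) (hinf : G₀ ⊓ N ≤ H) : H = G₀ := by
  refine le_antisymm hle fun g hg ↦ ?_
  have hmem : g ∈ (H : Set G) * ((N ⊓ G₀ : Subgroup G) : Set G) := by
    rw [mul_inf_assoc H N G₀ hle, ← mul_normal, hsup]
    exact ⟨trivial, hg⟩
  obtain ⟨h, hh, k, hk, rfl⟩ := hmem
  exact mul_mem hh (hinf ⟨hk.2, hk.1⟩)

theorem inf_eq_of_le_of_card_le {H G₀ N : Subgroup G} [Finite N] (hle : H ≤ G₀)
    (hcard : Nat.card ↥(G₀ ⊓ N) ≤ Nat.card ↥(H ⊓ N)) : H ⊓ N = G₀ ⊓ N :=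
  have : Finite ↥(G₀ ⊓ N) := Set.Finite.subset (Set.toFinite (N : Set G)) inf_le_right
  eq_of_le_of_card_ge (inf_le_inf_right N hle) hcard

end Subgroup

open Subgroup

theorem no_proper_finiteIndex_of_minimal_ker_intersection {G G₁ : Type*} [Group G] [Group G₁]
    (f : G →* G₁) (hf : Function.Surjective f) (hker : Finite f.ker)
    (hG₁ : ∀ K : Subgroup G₁, K.index ≠ 0 → K = ⊤)
    (G₀ : Subgroup G) (hG₀ : G₀.index ≠ 0)
    (hmin : ∀ H : Subgroup G, H.index ≠ 0 →
      Nat.card ↥(G₀ ⊓ f.ker) ≤ Nat.card ↥(H ⊓ f.ker)) :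
    ∀ K : Subgroup G₀, K.index ≠ 0 → K = ⊤ := by
  intro K hK
  set H : Subgroup G := K.map G₀.subtype
  have hHG₀ : H ≤ G₀ := map_subtype_le K
  have hH : H.index ≠ 0 := by
    rw [index_map_subtype]
    exact mul_ne_zero hK hG₀
  have hsup : H ⊔ f.ker = ⊤ :=
    sup_ker_eq_top_of_map_eq_top (hG₁ _ (index_map_ne_zero_of_surjective hf hH))
  have hinf : H ⊓ f.ker = G₀ ⊓ f.ker := inf_eq_of_le_of_card_le hHG₀ (hmin H hH)
  have hHeq : H = G₀ := eq_of_le_of_sup_eq_top_of_inf_le hHG₀ hsup (hinf ▸ inf_le_left)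
  rw [← map_subtype_inj, ← MonoidHom.range_eq_map, range_subtype]
  exact hHeq
end

section
/- Let f : G → G₁ be a surjective group homomorphism with finite kernel. Then G has a smallest finite-index subgroup if and only if G₁ has a smallest finite-index subgroup. -/
/-- A group `G` has a smallest finite-index subgroup if there is a finite-index
subgroup contained in every finite-index subgroup of `G`.
(Index `0` means infinite index.) -/
def HasSmallestFiniteIndexSubgroup (G : Type*) [Group G] : Prop :=
  ∃ N : Subgroup G, N.index ≠ 0 ∧ ∀ H : Subgroup G, H.index ≠ 0 → N ≤ H

namespace Subgroup

variable {G G₁ : Type*} [Group G] [Group G₁]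

theorem finite_Iic (K : Subgroup G) [Finite K] : (Set.Iic K).Finite :=
  (Set.toFinite (K : Set G)).finite_subsets.preimage SetLike.coe_injective.injOn

/-- Only finitely many subgroups of `K` have the form `H ⊓ K`, so one of them, `E ⊓ K`, is
minimal; minimality applied to `H ⊓ E` puts it inside every finite-index `H`. -/
theorem exists_index_ne_zero_inf_le_of_finite (K : Subgroup G) [Finite K] :
    ∃ E : Subgroup G, E.index ≠ 0 ∧ ∀ H : Subgroup G, H.index ≠ 0 → E ⊓ K ≤ H := by
  have hfin : ((· ⊓ K) '' {H : Subgroup G | H.index ≠ 0}).Finite :=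
    K.finite_Iic.subset (by rintro _ ⟨H, -, rfl⟩; exact inf_le_right (a := H))
  obtain ⟨E, hE, hEmin⟩ := hfin.exists_minimalFor' _ _ ⟨⊤, by simp⟩
  refine ⟨E, hE, fun H hH => ?_⟩
  have hle : H ⊓ E ⊓ K ≤ E ⊓ K := inf_le_inf_right K inf_le_right
  calc E ⊓ K ≤ H ⊓ E ⊓ K := hEmin (index_inf_ne_zero hH hE) hle
    _ ≤ H := inf_le_left.trans inf_le_left

theorem comap_map_inf_inf_le {f : G →* G₁} {H E : Subgroup G} (hE : E ⊓ f.ker ≤ H) :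
    ((H ⊓ E).map f).comap f ⊓ E ≤ H := by
  rintro x ⟨⟨y, ⟨hyH, hyE⟩, hfy⟩, hxE⟩
  have hk : y⁻¹ * x ∈ E ⊓ f.ker := ⟨E.mul_mem (E.inv_mem hyE) hxE, by simp [hfy]⟩
  simpa using mul_mem hyH (hE hk)

end Subgroup

open Subgroup

namespace HasSmallestFiniteIndexSubgroup

variable {G G₁ : Type*} [Group G] [Group G₁] {f : G →* G₁}

theorem map (hf : Function.Surjective f) (hG : HasSmallestFiniteIndexSubgroup G) :
    HasSmallestFiniteIndexSubgroup G₁ := by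
  obtain ⟨N, hN, hNmin⟩ := hG
  refine ⟨N.map f, index_map_ne_zero_of_surjective hf hN, fun H₁ hH₁ => ?_⟩
  rw [← map_comap_eq_self_of_surjective hf H₁]
  exact map_mono (hNmin _ (by rwa [index_comap_of_surjective _ hf]))

theorem of_map (hf : Function.Surjective f) [Finite f.ker]
    (hG₁ : HasSmallestFiniteIndexSubgroup G₁) : HasSmallestFiniteIndexSubgroup G := by
  obtain ⟨N₁, hN₁, hN₁min⟩ := hG₁
  obtain ⟨E, hE, hEmin⟩ := exists_index_ne_zero_inf_le_of_finite f.ker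
  -- `N₁.comap f` lies in every `(H ⊓ E) ⊔ f.ker`; meeting it with `E` removes the kernel
  -- elements that are not in `H`.
  refine ⟨N₁.comap f ⊓ E,
    index_inf_ne_zero (by rwa [index_comap_of_surjective _ hf]) hE, fun H hH => ?_⟩
  have hN₁le := hN₁min _ (index_map_ne_zero_of_surjective hf (index_inf_ne_zero hH hE))
  exact (inf_le_inf_right E (comap_mono hN₁le)).trans (comap_map_inf_inf_le (hEmin H hH))

end HasSmallestFiniteIndexSubgroup

theorem hasSmallestFiniteIndexSubgroup_iff_of_surjective_finite_ker
    {G G₁ : Type*} [Group G] [Group G₁] (f : G →* G₁)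
    (hf : Function.Surjective f) (hker : Finite f.ker) :
    HasSmallestFiniteIndexSubgroup G ↔ HasSmallestFiniteIndexSubgroup G₁ :=
  ⟨.map hf, .of_map hf⟩
end

section
/- Let A and B be groups, π : A → B a surjective group homomorphism with finite kernel, φ an automorphism of B, and ψ : A → A a group homomorphism such that π(a) = φ(π(ψ(a))) for all a ∈ A. Suppose that the only subgroup C of A with π(C) = B is A itself. Then ψ is bijective (an automorphism of A). -/
/-!
Since `π ∘ ψ = φ⁻¹ ∘ π`, the image of `ψ` already maps onto `B`, so `ψ` is surjective by the
minimality of `A`. The same relation gives `ψ⁻¹(Ker π) = Ker π`, so the surjection `ψ` restricts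
to a self-map of the finite group `Ker π` that is onto, hence injective; as `Ker ψ ≤ Ker π`,
`ψ` is injective.
-/

namespace MonoidHom

theorem injective_of_surjective_of_comap_eq_self {G : Type*} [Group G] {f : G →* G}
    (hf : Function.Surjective f) {K : Subgroup G} (hfin : (K : Set G).Finite)
    (hK : K.comap f = K) : Function.Injective f := by
  have hmem (x : G) : f x ∈ K ↔ x ∈ K := by rw [← Subgroup.mem_comap, hK]
  have hmaps : Set.MapsTo f K K := fun x hx => (hmem x).mpr hx
  have hsurjOn : Set.SurjOn f K K := fun y hy => by
    obtain ⟨x, rfl⟩ := hf y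
    exact ⟨x, (hmem x).mp hy, rfl⟩
  have hinjOn : Set.InjOn f K := ((hfin.surjOn_iff_bijOn_of_mapsTo hmaps).mp hsurjOn).injOn
  refine (injective_iff_map_eq_one f).mpr fun a ha => ?_
  have haK : a ∈ K := (hmem a).mp (ha ▸ K.one_mem)
  exact hinjOn haK K.one_mem (ha.trans f.map_one.symm)

end MonoidHom

theorem lift_automorphism_bijective {A B : Type*} [Group A] [Group B]
    (π : A →* B) (hπ : Function.Surjective π) (hker : Finite π.ker)
    (φ : MulAut B) (ψ : A →* A)
    (hcomm : ∀ a : A, π a = φ (π (ψ a)))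
    (hA : ∀ C : Subgroup A, C.map π = ⊤ → C = ⊤) :
    Function.Bijective ψ := by
  have hπψ : π.comp ψ = (φ.symm : B →* B).comp π :=
    MonoidHom.ext fun a => by simp [hcomm a]
  have hsurj : Function.Surjective ψ := by
    rw [← MonoidHom.range_eq_top]
    apply hA
    rw [MonoidHom.map_range, hπψ, MonoidHom.range_eq_top]
    exact φ.symm.surjective.comp hπ
  have hkerψ : π.ker.comap ψ = π.ker := by
    rw [MonoidHom.comap_ker, hπψ, MonoidHom.ker_mulEquiv_comp]
  exact ⟨MonoidHom.injective_of_surjective_of_comap_eq_self hsurj (Set.toFinite _) hkerψ, hsurj⟩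
end
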